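/- arXiv:1304.8102 — 3 statements merged into one kernel-verified Lean document; each statement's English description precedes it below -/
import Mathlib

section
/- Let n ≥ 1, let f : E → ℝ be a nonnegative, measurable, integrable function, and let 0 < A₁ ≤ A₂. Suppose Metric.closedBall 0 d_min ⊆ Ω_i ⊆ Metric.closedBall 0 d_max for every i, with 0 < d_min ≤ d_max, and suppose that for every unit vector u ∈ E the function r ↦ r^{n−1} · f(r • u) is antitone (non-increasing) on the interval [A₁·d_min, A₂·d_max]. Then the symbol error rate as a function of the signal amplitude, P_e(A) = 1 − Σ_{i=1}^{M} q_i ∫_{A • Ω_i} f(x) dx, is convex on the interval [A₁, A₂]. -/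
/-!
Along a unit direction `u`, a region `A • Ω` that is star-shaped about the origin meets the open
ray through `u` in the segment `(0, A ρ(u)]` up to a null set, where `ρ(u) ∈ [d_min, d_max]` is the
radial function of `Ω`. Polar coordinates therefore give
`∫_{A • Ω} f = ∫_{S^{n-1}} ∫_0^{A ρ(u)} r^{n-1} f(r u) dr dσ(u)`.
An integral `t ↦ ∫_0^t h` is concave wherever its integrand `h` is non-increasing (its secant
slopes decrease), so every inner integral, and hence every correct-decision probability, is concave
in `A` on `[A₁, A₂]`. A nonnegative combination of concave functions is concave, and
`P_e = 1 - ∑ q_i P_{c,i}` is convex.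
-/

open MeasureTheory Real Set Pointwise

lemma concaveOn_sum {𝕜 E β ι : Type*} [Semiring 𝕜] [PartialOrder 𝕜] [AddCommMonoid E]
    [AddCommMonoid β] [PartialOrder β] [IsOrderedAddMonoid β] [SMul 𝕜 E] [Module 𝕜 β]
    {s : Set E} {f : ι → E → β} (t : Finset ι) (hs : Convex 𝕜 s)
    (hf : ∀ i ∈ t, ConcaveOn 𝕜 s (f i)) : ConcaveOn 𝕜 s (fun x => ∑ i ∈ t, f i x) := by
  simpa only [← Finset.sum_apply] using
    Finset.sum_induction f (ConcaveOn 𝕜 s) (fun _ _ => ConcaveOn.add) (concaveOn_const 0 hs) hf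

lemma concaveOn_integral {E α : Type*} [AddCommMonoid E] [Module ℝ E] [MeasurableSpace α]
    {μ : Measure α} {s : Set E} {g : E → α → ℝ} (hs : Convex ℝ s)
    (hint : ∀ x ∈ s, Integrable (g x) μ) (hg : ∀ᵐ a ∂μ, ConcaveOn ℝ s (g · a)) :
    ConcaveOn ℝ s (fun x => ∫ a, g x a ∂μ) := by
  refine ⟨hs, fun x hx y hy b c hb hc hbc => ?_⟩
  have hxy : b • x + c • y ∈ s := hs hx hy hb hc hbc
  have hbx := (hint x hx).const_mul b
  have hcy := (hint y hy).const_mul c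
  calc b • ∫ a, g x a ∂μ + c • ∫ a, g y a ∂μ = ∫ a, b * g x a + c * g y a ∂μ := by
        rw [integral_add hbx hcy, integral_const_mul, integral_const_mul, smul_eq_mul, smul_eq_mul]
    _ ≤ ∫ a, g (b • x + c • y) a ∂μ :=
        integral_mono_ae (hbx.add hcy) (hint _ hxy) <| by
          filter_upwards [hg] with a ha using ha.2 hx hy hb hc hbc

lemma ConcaveOn.comp_mul_const {φ : ℝ → ℝ} {s t : Set ℝ} (hφ : ConcaveOn ℝ s φ) (ρ : ℝ)
    (ht : Convex ℝ t) (hts : MapsTo (· * ρ) t s) : ConcaveOn ℝ t (fun A => φ (A * ρ)) :=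
  (hφ.comp_linearMap (LinearMap.mulRight ℝ ρ)).subset hts ht

section Antitone

variable {h : ℝ → ℝ} {L U : ℝ}

lemma AntitoneOn.mul_le_intervalIntegral {x y : ℝ} (hh : AntitoneOn h (Icc x y)) (hxy : x ≤ y) :
    (y - x) * h y ≤ ∫ r in x..y, h r := by
  have hint : IntervalIntegrable h volume x y := (uIcc_of_le hxy ▸ hh).intervalIntegrable
  calc (y - x) * h y = ∫ _ in x..y, h y := by simp
    _ ≤ ∫ r in x..y, h r := intervalIntegral.integral_mono_on hxy intervalIntegrable_const hint
        fun r hr => hh hr (right_mem_Icc.2 hxy) hr.2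

lemma AntitoneOn.intervalIntegral_le_mul {x y : ℝ} (hh : AntitoneOn h (Icc x y)) (hxy : x ≤ y) :
    ∫ r in x..y, h r ≤ (y - x) * h x := by
  have hint : IntervalIntegrable h volume x y := (uIcc_of_le hxy ▸ hh).intervalIntegrable
  calc ∫ r in x..y, h r ≤ ∫ _ in x..y, h x := intervalIntegral.integral_mono_on hxy hint
        intervalIntegrable_const fun r hr => hh (left_mem_Icc.2 hxy) hr hr.1
    _ = (y - x) * h x := by simp

lemma AntitoneOn.concaveOn_intervalIntegral (hh : AntitoneOn h (Icc L U)) :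
    ConcaveOn ℝ (Icc L U) (fun t => ∫ r in L..t, h r) := by
  have hsub : ∀ {x y}, x ∈ Icc L U → y ∈ Icc L U →
      (∫ r in L..y, h r) - ∫ r in L..x, h r = ∫ r in x..y, h r := fun hx hy =>
    intervalIntegral.integral_interval_sub_left
      (hh.mono (uIcc_subset_Icc (left_mem_Icc.2 (hx.1.trans hx.2)) hy)).intervalIntegrable
      (hh.mono (uIcc_subset_Icc (left_mem_Icc.2 (hx.1.trans hx.2)) hx)).intervalIntegrable
  refine concaveOn_of_slope_anti_adjacent (convex_Icc L U) fun {x y z} hx hz hxy hyz => ?_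
  have hy : y ∈ Icc L U := ⟨hx.1.trans hxy.le, hyz.le.trans hz.2⟩
  rw [hsub hy hz, hsub hx hy]
  calc (∫ r in y..z, h r) / (z - y) ≤ h y := by
        rw [div_le_iff₀ (sub_pos.2 hyz), mul_comm]
        exact (hh.mono (Icc_subset_Icc hy.1 hz.2)).intervalIntegral_le_mul hyz.le
    _ ≤ (∫ r in x..y, h r) / (y - x) := by
        rw [le_div_iff₀ (sub_pos.2 hxy), mul_comm]
        exact (hh.mono (Icc_subset_Icc hx.1 hy.2)).mul_le_intervalIntegral hxy.le

lemma AntitoneOn.concaveOn_integral_Ioc {a : ℝ} (haL : a ≤ L) (hh : AntitoneOn h (Icc L U)) :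
    ConcaveOn ℝ (Icc L U) (fun t => ∫ r in Ioc a t, h r) := by
  -- If `h` is not integrable near `a`, all these integrals take the junk value `0`.
  by_cases ha : IntegrableOn h (Ioc a L)
  · refine (hh.concaveOn_intervalIntegral.add_const (∫ r in Ioc a L, h r)).congr
      fun t ht => ?_
    have hLt : IntegrableOn h (Ioc L t) :=
      ((hh.mono (Icc_subset_Icc_right ht.2)).integrableOn_isCompact isCompact_Icc).mono_set
        Ioc_subset_Icc_self
    rw [← Ioc_union_Ioc_eq_Ioc haL ht.1, setIntegral_union (Ioc_disjoint_Ioc_of_le le_rfl)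
      measurableSet_Ioc ha hLt, Pi.add_apply, intervalIntegral.integral_of_le ht.1, add_comm]
  · refine (concaveOn_const 0 (convex_Icc L U)).congr fun t ht => ?_
    exact (integral_undef fun hint : IntegrableOn h (Ioc a t) =>
      ha (hint.mono_set (Ioc_subset_Ioc_right ht.1))).symm

end Antitone

lemma homeomorphUnitSphereProd_snd_smul_fst {E : Type*} [NormedAddCommGroup E] [NormedSpace ℝ E]
    (x : ({0}ᶜ : Set E)) :
    ((homeomorphUnitSphereProd E x).2 : ℝ) • ((homeomorphUnitSphereProd E x).1 : E) = x := by
  simp [smul_inv_smul₀ (norm_ne_zero_iff.2 x.2)]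

section Polar

open Metric

variable {E F : Type*} [NormedAddCommGroup E] [NormedSpace ℝ E] [FiniteDimensional ℝ E]
  [MeasurableSpace E] [BorelSpace E] [NormedAddCommGroup F] (μ : Measure E) [μ.IsAddHaarMeasure]

lemma integral_volumeIoiPow [NormedSpace ℝ F] (k : ℕ) (g : ℝ → F) :
    ∫ r : Ioi (0 : ℝ), g r ∂Measure.volumeIoiPow k = ∫ r in Ioi (0 : ℝ), r ^ k • g r := by
  simp only [Measure.volumeIoiPow, ENNReal.ofReal]
  rw [integral_withDensity_eq_integral_smul (measurable_subtype_coe.pow_const _).real_toNNReal,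
    integral_subtype_comap measurableSet_Ioi fun r => (r ^ k).toNNReal • g r]
  refine setIntegral_congr_fun measurableSet_Ioi fun r hr => ?_
  rw [NNReal.smul_def, Real.coe_toNNReal _ (pow_nonneg hr.out.le _)]

lemma integrable_comp_smul_toSphere_prod {g : E → F} (hg : Integrable g μ) :
    Integrable (fun p : sphere (0 : E) 1 × Ioi (0 : ℝ) => g ((p.2 : ℝ) • (p.1 : E)))
      (μ.toSphere.prod (.volumeIoiPow (Module.finrank ℝ E - 1))) := by
  rw [← μ.measurePreserving_homeomorphUnitSphereProd.integrable_comp_emb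
    (Homeomorph.measurableEmbedding _)]
  simp only [Function.comp_def, homeomorphUnitSphereProd_snd_smul_fst]
  exact (integrableOn_iff_comap_subtypeVal (measurableSet_singleton 0).compl).1 hg.integrableOn

lemma integral_eq_integral_comp_smul_toSphere_prod [Nontrivial E] [NormedSpace ℝ F] (g : E → F) :
    ∫ x, g x ∂μ = ∫ p : sphere (0 : E) 1 × Ioi (0 : ℝ), g ((p.2 : ℝ) • (p.1 : E))
      ∂(μ.toSphere.prod (.volumeIoiPow (Module.finrank ℝ E - 1))) := by
  rw [← μ.measurePreserving_homeomorphUnitSphereProd.integral_comp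
    (Homeomorph.measurableEmbedding _)]
  simp only [homeomorphUnitSphereProd_snd_smul_fst]
  rw [integral_subtype_comap (measurableSet_singleton 0).compl, restrict_compl_singleton]

lemma integrable_toSphere_integral_Ioi [NormedSpace ℝ F] {g : E → F} (hg : Integrable g μ) :
    Integrable (fun u : sphere (0 : E) 1 =>
      ∫ r in Ioi (0 : ℝ), r ^ (Module.finrank ℝ E - 1) • g (r • (u : E))) μ.toSphere := by
  exact (integrable_comp_smul_toSphere_prod μ hg).integral_prod_left.congr <|
    .of_forall fun u => integral_volumeIoiPow _ fun r => g (r • (u : E))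

lemma integral_eq_integral_toSphere_integral_Ioi [Nontrivial E] [NormedSpace ℝ F] {g : E → F}
    (hg : Integrable g μ) :
    ∫ x, g x ∂μ = ∫ u : sphere (0 : E) 1,
      (∫ r in Ioi (0 : ℝ), r ^ (Module.finrank ℝ E - 1) • g (r • (u : E))) ∂μ.toSphere := by
  simp only [← integral_volumeIoiPow _ fun r => g (r • _)]
  rw [integral_eq_integral_comp_smul_toSphere_prod,
    integral_prod _ (integrable_comp_smul_toSphere_prod μ hg)]

end Polar

section RadialFunction

open Metric Bornology

variable {E F : Type*} [NormedAddCommGroup E] [NormedSpace ℝ E] [NormedAddCommGroup F]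
  [NormedSpace ℝ F] {Ω : Set E} {u : E}

/-- Distance from the origin to the boundary of `Ω` along `u`, in units of `‖u‖`; it is
`0 = sSup ∅` when no positive multiple of `u` lies in `Ω`. -/
noncomputable def radialFunction (Ω : Set E) (u : E) : ℝ := sSup {r : ℝ | 0 < r ∧ r • u ∈ Ω}

lemma StarConvex.setOf_smul_mem_ae_eq_Ioc (hΩ : StarConvex ℝ 0 Ω)
    (hbdd : BddAbove {r : ℝ | 0 < r ∧ r • u ∈ Ω}) :
    {r : ℝ | 0 < r ∧ r • u ∈ Ω} =ᵐ[volume] Ioc 0 (radialFunction Ω u) := by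
  set S := {r : ℝ | 0 < r ∧ r • u ∈ Ω}
  have hsub : S ⊆ Ioc 0 (radialFunction Ω u) := fun r hr => ⟨hr.1, le_csSup hbdd hr⟩
  have hsup : Ioo 0 (radialFunction Ω u) ⊆ S := by
    rintro r ⟨hr0, hr⟩
    obtain hS | hS := S.eq_empty_or_nonempty
    · have hρ : radialFunction Ω u = 0 := by
        change sSup S = 0
        rw [hS, Real.sSup_empty]
      linarith
    obtain ⟨s, hs, hrs⟩ := exists_lt_of_lt_csSup hS hr
    have hru : r • u = (r / s) • s • u := by rw [smul_smul, div_mul_cancel₀ _ hs.1.ne']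
    exact ⟨hr0, hru ▸ hΩ.smul_mem hs.2 (div_pos hr0 hs.1).le ((div_le_one hs.1).2 hrs.le)⟩
  exact hsub.eventuallyLE.antisymm (Ioo_ae_eq_Ioc.symm.le.trans hsup.eventuallyLE)

lemma radialFunction_smul {A : ℝ} (hA : 0 < A) (Ω : Set E) (u : E) :
    radialFunction (A • Ω) u = A * radialFunction Ω u := by
  have : {r : ℝ | 0 < r ∧ r • u ∈ A • Ω} = A • {r : ℝ | 0 < r ∧ r • u ∈ Ω} := by
    ext r
    simp only [mem_ofPred_eq, mem_smul_set_iff_inv_smul_mem₀ hA.ne', smul_smul, smul_eq_mul]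
    rw [mul_pos_iff_of_pos_left (inv_pos.2 hA)]
  rw [radialFunction, this, Real.sSup_smul_of_nonneg hA.le, smul_eq_mul, radialFunction]

lemma Bornology.IsBounded.bddAbove_setOf_smul_mem (hΩ : IsBounded Ω) (hu : u ≠ 0) :
    BddAbove {r : ℝ | 0 < r ∧ r • u ∈ Ω} := by
  obtain ⟨R, hR⟩ := hΩ.subset_closedBall 0
  refine ⟨R / ‖u‖, fun r hr => (le_div_iff₀ (norm_pos_iff.2 hu)).2 ?_⟩
  simpa [norm_smul, abs_of_pos hr.1] using hR hr.2

lemma le_radialFunction {d : ℝ} (hd : 0 < d) (hΩ : closedBall 0 d ⊆ Ω) (hΩb : IsBounded Ω)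
    (hu : ‖u‖ = 1) : d ≤ radialFunction Ω u :=
  le_csSup (hΩb.bddAbove_setOf_smul_mem (norm_ne_zero_iff.1 (hu ▸ one_ne_zero)))
    ⟨hd, hΩ (by simp [norm_smul, hu, abs_of_pos hd])⟩

lemma radialFunction_le {d : ℝ} (hd : 0 ≤ d) (hΩ : Ω ⊆ closedBall 0 d) (hu : ‖u‖ = 1) :
    radialFunction Ω u ≤ d :=
  Real.sSup_le (fun r hr => by simpa [norm_smul, hu, abs_of_pos hr.1] using hΩ hr.2) hd

lemma StarConvex.setIntegral_Ioi_indicator_eq_setIntegral_Ioc [MeasurableSpace E] [BorelSpace E]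
    (hΩ : StarConvex ℝ 0 Ω) (hΩm : MeasurableSet Ω) (hbdd : BddAbove {r : ℝ | 0 < r ∧ r • u ∈ Ω})
    (k : ℕ) (g : E → F) :
    ∫ r in Ioi (0 : ℝ), r ^ k • Ω.indicator g (r • u) =
      ∫ r in Ioc 0 (radialFunction Ω u), r ^ k • g (r • u) := by
  have hind : (fun r : ℝ => r ^ k • Ω.indicator g (r • u)) =
      ((· • u) ⁻¹' Ω).indicator fun r => r ^ k • g (r • u) := by
    ext r
    by_cases hr : r • u ∈ Ω <;> simp [hr]
  have hmeas : MeasurableSet ((· • u) ⁻¹' Ω : Set ℝ) := hΩm.preimage (measurable_id.smul_const u)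
  rw [hind, setIntegral_indicator hmeas]
  exact setIntegral_congr_set (hΩ.setOf_smul_mem_ae_eq_Ioc hbdd)

variable [FiniteDimensional ℝ E] [MeasurableSpace E] [BorelSpace E]
  (μ : Measure E) [μ.IsAddHaarMeasure]

lemma StarConvex.setIntegral_eq_integral_toSphere [Nontrivial E] (hΩ : StarConvex ℝ 0 Ω)
    (hΩm : MeasurableSet Ω) (hΩb : IsBounded Ω) {g : E → F} (hg : Integrable g μ) :
    ∫ x in Ω, g x ∂μ = ∫ u : sphere (0 : E) 1,
      (∫ r in Ioc 0 (radialFunction Ω u), r ^ (Module.finrank ℝ E - 1) • g (r • (u : E)))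
        ∂μ.toSphere := by
  rw [← integral_indicator hΩm, integral_eq_integral_toSphere_integral_Ioi μ (hg.indicator hΩm)]
  congr 1 with u
  exact hΩ.setIntegral_Ioi_indicator_eq_setIntegral_Ioc hΩm
    (hΩb.bddAbove_setOf_smul_mem (ne_zero_of_mem_unit_sphere u)) _ g

lemma StarConvex.integrable_toSphere_setIntegral_Ioc (hΩ : StarConvex ℝ 0 Ω)
    (hΩm : MeasurableSet Ω) (hΩb : IsBounded Ω) {g : E → F} (hg : Integrable g μ) :
    Integrable (fun u : sphere (0 : E) 1 =>
      ∫ r in Ioc 0 (radialFunction Ω u), r ^ (Module.finrank ℝ E - 1) • g (r • (u : E)))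
      μ.toSphere := by
  refine (integrable_toSphere_integral_Ioi μ (hg.indicator hΩm)).congr (.of_forall fun u => ?_)
  exact hΩ.setIntegral_Ioi_indicator_eq_setIntegral_Ioc hΩm
    (hΩb.bddAbove_setOf_smul_mem (ne_zero_of_mem_unit_sphere u)) _ g

end RadialFunction

open Metric Bornology in
theorem StarConvex.concaveOn_setIntegral_smul {E : Type*} [NormedAddCommGroup E]
    [NormedSpace ℝ E] [FiniteDimensional ℝ E] [MeasurableSpace E] [BorelSpace E] [Nontrivial E]
    (μ : Measure E) [μ.IsAddHaarMeasure] {f : E → ℝ} (hf : Integrable f μ) {Ω : Set E}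
    (hΩ : StarConvex ℝ 0 Ω) (hΩm : MeasurableSet Ω) {dmin dmax A₁ A₂ : ℝ} (hA₁ : 0 < A₁)
    (hdmin : 0 < dmin) (hball : closedBall 0 dmin ⊆ Ω) (hΩball : Ω ⊆ closedBall 0 dmax)
    (hanti : ∀ u : E, ‖u‖ = 1 → AntitoneOn (fun r => r ^ (Module.finrank ℝ E - 1) * f (r • u))
      (Icc (A₁ * dmin) (A₂ * dmax))) :
    ConcaveOn ℝ (Icc A₁ A₂) (fun A => ∫ x in A • Ω, f x ∂μ) := by
  have hΩb : IsBounded Ω := isBounded_closedBall.subset hΩball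
  have hAΩ : ∀ A : ℝ, StarConvex ℝ 0 (A • Ω) := fun A => by simpa using hΩ.smul A
  have hrepr : ∀ A ∈ Icc A₁ A₂, ∫ x in A • Ω, f x ∂μ = ∫ u : sphere (0 : E) 1,
      (∫ r in Ioc 0 (A * radialFunction Ω u), r ^ (Module.finrank ℝ E - 1) * f (r • (u : E)))
        ∂μ.toSphere := fun A hA => by
    simp only [(hAΩ A).setIntegral_eq_integral_toSphere μ (hΩm.const_smul₀ A) (hΩb.smul₀ A) hf,
      radialFunction_smul (hA₁.trans_le hA.1), smul_eq_mul]
  have hint : ∀ A ∈ Icc A₁ A₂, Integrable (fun u : sphere (0 : E) 1 =>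
      ∫ r in Ioc 0 (A * radialFunction Ω u), r ^ (Module.finrank ℝ E - 1) * f (r • (u : E)))
      μ.toSphere := fun A hA => by
    simpa only [radialFunction_smul (hA₁.trans_le hA.1), smul_eq_mul] using
      (hAΩ A).integrable_toSphere_setIntegral_Ioc μ (hΩm.const_smul₀ A) (hΩb.smul₀ A) hf
  refine (concaveOn_integral (convex_Icc A₁ A₂) hint (.of_forall fun u => ?_)).congr
    fun A hA => (hrepr A hA).symm
  have hu : ‖(u : E)‖ = 1 := norm_eq_of_mem_sphere u
  have hρmin : dmin ≤ radialFunction Ω u := le_radialFunction hdmin hball hΩb hu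
  have hdmax : 0 ≤ dmax := nonempty_closedBall.1 ⟨0, hΩball (hball (mem_closedBall_self hdmin.le))⟩
  have hρmax : radialFunction Ω u ≤ dmax := radialFunction_le hdmax hΩball hu
  exact ((hanti u hu).concaveOn_integral_Ioc (by positivity)).comp_mul_const _ (convex_Icc A₁ A₂)
    fun A hA => ⟨mul_le_mul hA.1 hρmin hdmin.le (hA₁.trans_le hA.1).le,
      mul_le_mul hA.2 hρmax (hdmin.trans_le hρmin).le ((hA₁.trans_le hA.1).trans_le hA.2).le⟩

theorem ser_convex_in_amplitude_general_noise_general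
    (n M : ℕ) (hn : 1 ≤ n)
    (f : EuclideanSpace ℝ (Fin n) → ℝ)
    (hf_int : Integrable f)
    (A₁ A₂ : ℝ) (hA₁ : 0 < A₁)
    (q : Fin M → ℝ) (hq : ∀ i, 0 ≤ q i)
    (Ω : Fin M → Set (EuclideanSpace ℝ (Fin n)))
    (hΩmeas : ∀ i, MeasurableSet (Ω i))
    (hΩstar : ∀ i, StarConvex ℝ (0 : EuclideanSpace ℝ (Fin n)) (Ω i))
    (dmin dmax : ℝ) (hdmin : 0 < dmin)
    (hball : ∀ i, Metric.closedBall (0 : EuclideanSpace ℝ (Fin n)) dmin ⊆ Ω i ∧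
      Ω i ⊆ Metric.closedBall (0 : EuclideanSpace ℝ (Fin n)) dmax)
    (hanti : ∀ u : EuclideanSpace ℝ (Fin n), ‖u‖ = 1 →
      AntitoneOn (fun r : ℝ => r ^ (n - 1) * f (r • u))
        (Icc (A₁ * dmin) (A₂ * dmax)))
    (Pe : ℝ → ℝ)
    (hPe : ∀ A, Pe A = 1 - ∑ i, q i * ∫ x in A • Ω i, f x) :
    ConvexOn ℝ (Icc A₁ A₂) Pe := by
  have : Nontrivial (EuclideanSpace ℝ (Fin n)) :=
    Module.nontrivial_of_finrank_pos (finrank_euclideanSpace_fin (𝕜 := ℝ) (n := n) ▸ hn)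
  have hPc : ∀ i, ConcaveOn ℝ (Icc A₁ A₂) (fun A => ∫ x in A • Ω i, f x) := fun i =>
    (hΩstar i).concaveOn_setIntegral_smul volume hf_int (hΩmeas i) hA₁ hdmin (hball i).1
      (hball i).2 (by rwa [finrank_euclideanSpace_fin])
  exact ((convexOn_const 1 (convex_Icc A₁ A₂)).sub (concaveOn_sum Finset.univ (convex_Icc A₁ A₂)
    fun i _ => (hPc i).smul (hq i))).congr fun A _ => (hPe A).symm

/-- For an arbitrary noise density `f` whose radial amplitude
density `r ↦ r^(n-1) f(r • u)` is non-increasing on `[A₁ d_min, A₂ d_max]` along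
every direction, the SER of a decoder with center-convex decision regions is
convex in the signal amplitude on `[A₁, A₂]`. -/
theorem ser_convex_in_amplitude_general_noise
    (n M : ℕ) (hn : 1 ≤ n)
    (f : EuclideanSpace ℝ (Fin n) → ℝ)
    (hf_nonneg : ∀ x, 0 ≤ f x) (hf_meas : Measurable f)
    (hf_int : Integrable f)
    (A₁ A₂ : ℝ) (hA₁ : 0 < A₁) (hA₁₂ : A₁ ≤ A₂)
    (q : Fin M → ℝ) (hq : ∀ i, 0 ≤ q i) (hqsum : ∑ i, q i = 1)
    (Ω : Fin M → Set (EuclideanSpace ℝ (Fin n)))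
    (hΩmeas : ∀ i, MeasurableSet (Ω i))
    (hΩstar : ∀ i, StarConvex ℝ (0 : EuclideanSpace ℝ (Fin n)) (Ω i))
    (dmin dmax : ℝ) (hdmin : 0 < dmin) (hdd : dmin ≤ dmax)
    (hball : ∀ i, Metric.closedBall (0 : EuclideanSpace ℝ (Fin n)) dmin ⊆ Ω i ∧
      Ω i ⊆ Metric.closedBall (0 : EuclideanSpace ℝ (Fin n)) dmax)
    (hanti : ∀ u : EuclideanSpace ℝ (Fin n), ‖u‖ = 1 →
      AntitoneOn (fun r : ℝ => r ^ (n - 1) * f (r • u))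
        (Icc (A₁ * dmin) (A₂ * dmax)))
    (Pe : ℝ → ℝ)
    (hPe : ∀ A, Pe A = 1 - ∑ i, q i * ∫ x in A • Ω i, f x) :
    ConvexOn ℝ (Icc A₁ A₂) Pe :=
  ser_convex_in_amplitude_general_noise_general n M hn f hf_int A₁ A₂ hA₁ q hq Ω hΩmeas hΩstar dmin
    dmax hdmin hball hanti Pe hPe
end

section
/- Let n ≥ 1 and d_min > 0. Let Ω_1, …, Ω_K ⊆ E be Lebesgue-measurable sets each of which is disjoint from the open ball of radius d_min centered at the origin (i.e. ‖x‖ ≥ d_min for every x ∈ Ω_k), and let c_1, …, c_K ≥ 0. Then the function B(γ) = Σ_{k=1}^{K} c_k ∫_{Ω_k} (γ/(2π))^{n/2} exp(−γ‖x‖²/2) dx is convex on the set {γ : γ > 0 and γ·d_min² ≥ n + √(2n)}. In particular, every pairwise error probability (K = 1, c = 1) and the BER (a nonnegative combination of pairwise error probabilities) of any decoder whose decision regions are at distance at least d_min from the transmitted point are convex in the SNR in this high-SNR regime. -/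
/-!
For fixed `x`, the density `γ ↦ (γ/2π)^(n/2) exp(-γ‖x‖²/2)` is, up to a constant,
`f(γ) = γ^p e^(-γt/2)` with `p = n/2`, `t = ‖x‖²`, and
`f''(γ) = γ^(p-2) e^(-γt/2) ((p - γt/2)² - p) = γ^(p-2) e^(-γt/2) ((γt - n)² - 2n) / 4`,
which is nonnegative once `γt ≥ n + √(2n)`. On the stated region this holds for every `x`
with `‖x‖ ≥ d_min`, so the integrand is pointwise convex in `γ`; integrals over the regions
and nonnegative combinations preserve convexity.
-/

open MeasureTheory Real Set

theorem ConvexOn.finset_sum {𝕜 E β ι : Type*} [Semiring 𝕜] [PartialOrder 𝕜]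
    [AddCommMonoid E] [SMul 𝕜 E] [AddCommMonoid β] [PartialOrder β] [IsOrderedAddMonoid β]
    [DistribMulAction 𝕜 β] {s : Set E} (hs : Convex 𝕜 s) (t : Finset ι) {f : ι → E → β}
    (hf : ∀ i ∈ t, ConvexOn 𝕜 s (f i)) : ConvexOn 𝕜 s fun x => ∑ i ∈ t, f i x := by
  refine ⟨hs, fun x hx y hy a b ha hb hab => ?_⟩
  calc ∑ i ∈ t, f i (a • x + b • y) ≤ ∑ i ∈ t, (a • f i x + b • f i y) :=
        Finset.sum_le_sum fun i hi => (hf i hi).2 hx hy ha hb hab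
    _ = a • ∑ i ∈ t, f i x + b • ∑ i ∈ t, f i y := by
        rw [Finset.sum_add_distrib, Finset.smul_sum, Finset.smul_sum]

theorem convexOn_integral {E α : Type*} [AddCommMonoid E] [Module ℝ E] [MeasurableSpace α]
    {μ : Measure α} {s : Set E} (hs : Convex ℝ s) {f : E → α → ℝ}
    (hf : ∀ᵐ a ∂μ, ConvexOn ℝ s (f · a)) (hint : ∀ x ∈ s, Integrable (f x) μ) :
    ConvexOn ℝ s fun x => ∫ a, f x a ∂μ := by
  refine ⟨hs, fun x hx y hy a b ha hb hab => ?_⟩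
  have hx' : Integrable (fun z => a • f x z) μ := (hint x hx).smul a
  have hy' : Integrable (fun z => b • f y z) μ := (hint y hy).smul b
  calc ∫ z, f (a • x + b • y) z ∂μ ≤ ∫ z, (a • f x z + b • f y z) ∂μ :=
        integral_mono_ae (hint _ (hs hx hy ha hb hab)) (hx'.add hy')
          (hf.mono fun z hz => hz.2 hx hy ha hb hab)
    _ = a • ∫ z, f x z ∂μ + b • ∫ z, f y z ∂μ := by
        rw [integral_add hx' hy', integral_smul, integral_smul]

theorem convexOn_rpow_mul_exp_neg_mul {ν t m : ℝ} (hν : 0 ≤ ν) (hm : 0 ≤ m) (ht : 0 ≤ t)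
    (hmt : ν + √(2 * ν) ≤ m * t) :
    ConvexOn ℝ (Ici m) fun γ => γ ^ (ν / 2) * exp (-γ * t / 2) := by
  set p := ν / 2
  have hE : ∀ γ : ℝ, HasDerivAt (fun γ => exp (-γ * t / 2)) (exp (-γ * t / 2) * (-t / 2)) γ :=
    fun γ => by simpa [neg_div] using (((hasDerivAt_id γ).neg.mul_const t).div_const 2).exp
  refine convexOn_of_hasDerivWithinAt2_nonneg (convex_Ici m)
    (f' := fun γ => γ ^ (p - 1) * (p - γ * t / 2) * exp (-γ * t / 2))
    (f'' := fun γ => γ ^ (p - 2) * ((p - γ * t / 2) ^ 2 - p) * exp (-γ * t / 2))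
    ?_ ?_ ?_ ?_
  · refine ContinuousOn.mul (fun γ _ => ?_) (by fun_prop)
    exact (continuousAt_rpow_const γ p (Or.inr (by positivity))).continuousWithinAt
  all_goals
    intro γ hγ
    rw [interior_Ici] at hγ
    have hγ0 : γ ≠ 0 := (hm.trans_lt hγ).ne'
    have hpow : ∀ q : ℝ, γ ^ (q + 1) = γ ^ q * γ := rpow_add_one hγ0
  · refine HasDerivAt.hasDerivWithinAt
      (((hasDerivAt_rpow_const (p := p) (Or.inl hγ0)).mul (hE γ)).congr_deriv ?_)
    rw [show p = p - 1 + 1 by ring, hpow]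
    ring_nf
  · have hlin := HasDerivAt.const_sub p (((hasDerivAt_id γ).mul_const t).div_const 2)
    refine HasDerivAt.hasDerivWithinAt ((((hasDerivAt_rpow_const (p := p - 1) (Or.inl hγ0)).mul
      hlin).mul (hE γ)).congr_deriv ?_)
    simp only [Pi.mul_apply, id_eq]
    rw [show p - 1 = p - 2 + 1 by ring, hpow]
    ring_nf
  · have hu : √(2 * ν) ≤ γ * t - ν := by nlinarith [mul_le_mul_of_nonneg_right hγ.le ht]
    have hq : 0 ≤ (p - γ * t / 2) ^ 2 - p := by
      simp only [p]
      nlinarith [(sqrt_le_left ((sqrt_nonneg _).trans hu)).1 hu]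
    have := rpow_pos_of_pos (hm.trans_lt hγ) (p - 2)
    positivity

noncomputable def awgnDensity (n : ℕ) (γ : ℝ) (x : EuclideanSpace ℝ (Fin n)) : ℝ :=
  (γ / (2 * π)) ^ ((n : ℝ) / 2) * exp (-γ * ‖x‖ ^ 2 / 2)

theorem convexOn_awgnDensity {n : ℕ} {m : ℝ} {x : EuclideanSpace ℝ (Fin n)} (hm : 0 ≤ m)
    (hx : n + √(2 * n) ≤ m * ‖x‖ ^ 2) : ConvexOn ℝ (Ici m) (awgnDensity n · x) := by
  refine ((convexOn_rpow_mul_exp_neg_mul n.cast_nonneg hm (sq_nonneg _) hx).smul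
    (c := ((2 * π) ^ ((n : ℝ) / 2))⁻¹) (by positivity)).congr fun γ hγ => ?_
  rw [awgnDensity, div_rpow (hm.trans hγ) (by positivity)]
  ring

theorem integrable_awgnDensity {n : ℕ} {γ : ℝ} (hγ : 0 < γ) : Integrable (awgnDensity n γ) := by
  have h := (GaussianFourier.integrable_cexp_neg_mul_sq_norm_add
    (V := EuclideanSpace ℝ (Fin n)) (b := (γ / 2 : ℂ)) (by simpa using hγ) 0 0).norm
  refine (h.congr (.of_forall fun x => ?_)).const_mul ((γ / (2 * π)) ^ ((n : ℝ) / 2))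
  simp [Complex.norm_exp, ← Complex.ofReal_pow, neg_div, div_mul_eq_mul_div]

theorem ber_pep_convex_high_snr_awgn_general
    (n K : ℕ)
    (dmin : ℝ) (hdmin : 0 < dmin)
    (Ω : Fin K → Set (EuclideanSpace ℝ (Fin n)))
    (hΩmeas : ∀ k, MeasurableSet (Ω k))
    (hΩfar : ∀ k, ∀ x ∈ Ω k, dmin ≤ ‖x‖)
    (c : Fin K → ℝ) (hc : ∀ k, 0 ≤ c k)
    (B : ℝ → ℝ)
    (hB : ∀ γ, B γ = ∑ k, c k * ∫ x in Ω k,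
      (γ / (2 * π)) ^ ((n : ℝ) / 2) * Real.exp (-γ * ‖x‖ ^ 2 / 2)) :
    ConvexOn ℝ {γ : ℝ | 0 < γ ∧ (n : ℝ) + Real.sqrt (2 * n) ≤ γ * dmin ^ 2}
      B := by
  set S := {γ : ℝ | 0 < γ ∧ (n : ℝ) + √(2 * n) ≤ γ * dmin ^ 2}
  set m := ((n : ℝ) + √(2 * n)) / dmin ^ 2
  have hd : 0 < dmin ^ 2 := by positivity
  have hSm : S ⊆ Ici m := fun γ hγ => (div_le_iff₀ hd).2 hγ.2
  have hS : Convex ℝ S := Set.OrdConnected.convex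
    ⟨fun γ hγ _ _ δ hδ => ⟨hγ.1.trans_le hδ.1, hγ.2.trans (by gcongr; exact hδ.1)⟩⟩
  have hfar : ∀ k, ∀ x ∈ Ω k, ConvexOn ℝ S (awgnDensity n · x) := fun k x hx =>
    (convexOn_awgnDensity (by positivity) (by
      rw [div_mul_eq_mul_div, le_div_iff₀ hd]
      gcongr
      exact hΩfar k x hx)).subset hSm hS
  have hB' : B = fun γ => ∑ k, c k • ∫ x in Ω k, awgnDensity n γ x := funext hB
  rw [hB']
  exact ConvexOn.finset_sum hS _ fun k _ => (convexOn_integral hS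
    (ae_restrict_of_forall_mem (hΩmeas k) (hfar k))
    fun γ hγ => (integrable_awgnDensity hγ.1).integrableOn).smul (hc k)

/-- In the AWGN channel, any nonnegative linear combination (e.g.
a PEP or the BER) of probabilities of regions at distance at least `d_min` from
the transmitted point is convex in the SNR on
`{γ | 0 < γ ∧ n + √(2n) ≤ γ d_min²}`. -/
theorem ber_pep_convex_high_snr_awgn
    (n K : ℕ) (hn : 1 ≤ n)
    (dmin : ℝ) (hdmin : 0 < dmin)
    (Ω : Fin K → Set (EuclideanSpace ℝ (Fin n)))
    (hΩmeas : ∀ k, MeasurableSet (Ω k))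
    (hΩfar : ∀ k, ∀ x ∈ Ω k, dmin ≤ ‖x‖)
    (c : Fin K → ℝ) (hc : ∀ k, 0 ≤ c k)
    (B : ℝ → ℝ)
    (hB : ∀ γ, B γ = ∑ k, c k * ∫ x in Ω k,
      (γ / (2 * π)) ^ ((n : ℝ) / 2) * Real.exp (-γ * ‖x‖ ^ 2 / 2)) :
    ConvexOn ℝ {γ : ℝ | 0 < γ ∧ (n : ℝ) + Real.sqrt (2 * n) ≤ γ * dmin ^ 2}
      B :=
  ber_pep_convex_high_snr_awgn_general n K dmin hdmin Ω hΩmeas hΩfar c hc B hB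
end

section
/- Let n ≥ 1 and d > 0, and consider the symbol error rate for a spherical decision region of radius d as a function of the noise power v > 0 in the AWGN channel: P_e(v) = 1 − ∫_{Metric.closedBall 0 d} (2πv)^{−n/2} exp(−‖x‖²/(2v)) dx. Then P_e is strictly convex on (0, d²/(n+2)] and strictly concave on [d²/(n+2), ∞); in particular v = d²/(n+2) is the unique inflection point. -/
/-!
In polar coordinates, followed by the substitution `r = √v s`, the ball integral becomes
`K Φ(d/√v)` with `Φ(R) = ∫₀^R s^(n-1) e^(-s²/2) ds` and `K > 0`, so the noise power enters
only through the upper limit. Hence `P_e'(v) = C v^(-(n+2)/2) e^(-d²/(2v))` with `C > 0`, and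
`P_e''(v)` is a positive multiple of `d² - (n+2) v`.
-/

open MeasureTheory Real Set

noncomputable def radialGaussianIntegral (k : ℕ) (R : ℝ) : ℝ :=
  ∫ s in (0 : ℝ)..R, s ^ k * exp (-s ^ 2 / 2)

theorem hasDerivAt_radialGaussianIntegral (k : ℕ) (R : ℝ) :
    HasDerivAt (radialGaussianIntegral k) (R ^ k * exp (-R ^ 2 / 2)) R := by
  have hc : Continuous fun s : ℝ => s ^ k * exp (-s ^ 2 / 2) := by fun_prop
  exact intervalIntegral.integral_hasDerivAt_right
    (hc.intervalIntegrable _ _) (hc.stronglyMeasurableAtFilter _ _) hc.continuousAt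

theorem rpow_neg_eq_inv_sqrt_pow (k : ℕ) {v : ℝ} (hv : 0 ≤ v) :
    v ^ (-(k : ℝ) / 2) = (√v ^ k)⁻¹ := by
  rw [sqrt_eq_rpow, ← rpow_natCast, ← rpow_mul hv, ← rpow_neg hv]
  ring_nf

theorem integral_pow_mul_exp_neg_sq_div_eq (k : ℕ) (d : ℝ) {v : ℝ} (hv : 0 < v) :
    ∫ r in (0 : ℝ)..d, r ^ k * exp (-r ^ 2 / (2 * v))
      = √v ^ (k + 1) * radialGaussianIntegral k (d / √v) := by
  have hs : 0 < √v := sqrt_pos.2 hv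
  have hscale : ∀ s : ℝ, (√v * s) ^ k * exp (-(√v * s) ^ 2 / (2 * v))
      = √v ^ k * (s ^ k * exp (-s ^ 2 / 2)) := by
    intro s
    rw [mul_pow, mul_pow, sq_sqrt hv.le, mul_assoc]
    congr 3
    field_simp
  have h := intervalIntegral.integral_comp_mul_left
    (fun r => r ^ k * exp (-r ^ 2 / (2 * v))) (a := 0) (b := d / √v) hs.ne'
  simp only [hscale, intervalIntegral.integral_const_mul, mul_zero,
    mul_div_cancel₀ d hs.ne', smul_eq_mul] at h
  rw [radialGaussianIntegral, pow_succ, mul_comm _ √v, mul_assoc, h]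
  field_simp

theorem hasDerivAt_radialGaussianIntegral_div_sqrt (k : ℕ) (d : ℝ) {v : ℝ} (hv : 0 < v) :
    HasDerivAt (fun w => radialGaussianIntegral k (d / √w))
      (-(d ^ (k + 1) / 2) * (v ^ (-((k : ℝ) + 3) / 2) * exp (-d ^ 2 / (2 * v)))) v := by
  have hs : 0 < √v := sqrt_pos.2 hv
  have hquot : HasDerivAt (fun w => d / √w) (-(d * (1 / (2 * √v))) / √v ^ 2) v :=
    (hasDerivAt_const v d).div (hasDerivAt_sqrt hv.ne') hs.ne' |>.congr_deriv (by ring)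
  refine ((hasDerivAt_radialGaussianIntegral k _).comp v hquot).congr_deriv ?_
  have hexp : -(d / √v) ^ 2 / 2 = -d ^ 2 / (2 * v) := by
    rw [div_pow, sq_sqrt hv.le]; ring
  rw [hexp, show -((k : ℝ) + 3) = -((k + 3 : ℕ) : ℝ) by push_cast; ring,
    rpow_neg_eq_inv_sqrt_pow _ hv.le, div_pow]
  field_simp
  ring

theorem hasDerivAt_rpow_mul_exp_neg_div (q a : ℝ) {v : ℝ} (hv : 0 < v) :
    HasDerivAt (fun w => w ^ q * exp (-a / w))
      (v ^ (q - 2) * exp (-a / v) * (q * v + a)) v := by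
  have hpow : HasDerivAt (fun w : ℝ => w ^ q) (q * v ^ (q - 1)) v :=
    hasDerivAt_rpow_const (Or.inl hv.ne')
  have hinv : HasDerivAt (fun w : ℝ => -a / w) (a / v ^ 2) v := by
    simpa only [div_eq_mul_inv, mul_neg, neg_mul, neg_neg]
      using (hasDerivAt_inv hv.ne').const_mul (-a)
  refine (hpow.mul hinv.exp).congr_deriv ?_
  have h1 : v ^ (q - 1) = v ^ (q - 2) * v := by
    rw [← rpow_add_one hv.ne']; ring_nf
  have h2 : v ^ q = v ^ (q - 2) * v ^ 2 := by
    rw [← rpow_natCast, ← rpow_add hv]; ring_nf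
  rw [h1, h2]
  field_simp

noncomputable def sphericalSER {E : Type*} [NormedAddCommGroup E] [NormedSpace ℝ E]
    [MeasurableSpace E] (μ : Measure E) (d v : ℝ) : ℝ :=
  1 - ∫ x in Metric.closedBall (0 : E) d,
    (2 * π * v) ^ (-(Module.finrank ℝ E : ℝ) / 2) * exp (-‖x‖ ^ 2 / (2 * v)) ∂μ

section

variable {E : Type*} [NormedAddCommGroup E] [NormedSpace ℝ E] [FiniteDimensional ℝ E]
  [Nontrivial E] [MeasurableSpace E] [BorelSpace E] (μ : Measure E) [μ.IsAddHaarMeasure]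

theorem setIntegral_closedBall_fun_norm {F : Type*} [NormedAddCommGroup F] [NormedSpace ℝ F]
    (f : ℝ → F) {d : ℝ} (hd : 0 ≤ d) :
    ∫ x in Metric.closedBall (0 : E) d, f ‖x‖ ∂μ
      = Module.finrank ℝ E • μ.real (Metric.ball 0 1) •
          ∫ r in (0 : ℝ)..d, r ^ (Module.finrank ℝ E - 1) • f r := by
  have hind : (Metric.closedBall (0 : E) d).indicator (fun x => f ‖x‖)
      = fun x => (Iic d).indicator f ‖x‖ := by
    ext x
    by_cases hx : ‖x‖ ≤ d <;> simp [hx]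
  rw [← integral_indicator measurableSet_closedBall, hind, integral_fun_norm_addHaar μ,
    intervalIntegral.integral_of_le hd, ← Ioi_inter_Iic,
    ← setIntegral_indicator measurableSet_Iic]
  congr 3
  ext r
  by_cases hr : r ∈ Iic d <;> simp [hr]

theorem sphericalSER_eq {d v : ℝ} (hd : 0 ≤ d) (hv : 0 < v) :
    sphericalSER μ d v = 1 - Module.finrank ℝ E * μ.real (Metric.ball 0 1) *
      (2 * π) ^ (-(Module.finrank ℝ E : ℝ) / 2) *
        radialGaussianIntegral (Module.finrank ℝ E - 1) (d / √v) := by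
  set n := Module.finrank ℝ E
  have hn : n - 1 + 1 = n := Nat.sub_add_cancel Module.finrank_pos
  have hpolar := setIntegral_closedBall_fun_norm μ
    (fun r => (2 * π * v) ^ (-(n : ℝ) / 2) * exp (-r ^ 2 / (2 * v))) hd
  have hconst : (2 * π * v) ^ (-(n : ℝ) / 2) * √v ^ n = (2 * π) ^ (-(n : ℝ) / 2) := by
    rw [mul_rpow (by positivity) hv.le, rpow_neg_eq_inv_sqrt_pow n hv.le, mul_assoc,
      inv_mul_cancel₀ (by positivity), mul_one]
  have hpull : ∫ r in (0 : ℝ)..d,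
        r ^ (n - 1) * ((2 * π * v) ^ (-(n : ℝ) / 2) * exp (-r ^ 2 / (2 * v)))
      = (2 * π * v) ^ (-(n : ℝ) / 2) *
          ∫ r in (0 : ℝ)..d, r ^ (n - 1) * exp (-r ^ 2 / (2 * v)) := by
    rw [← intervalIntegral.integral_const_mul]
    simp only [mul_left_comm]
  simp only [smul_eq_mul, nsmul_eq_mul] at hpolar
  rw [sphericalSER, hpolar, hpull, integral_pow_mul_exp_neg_sq_div_eq _ _ hv, hn, ← hconst]
  ring

theorem exists_hasDerivAt_sphericalSER {d : ℝ} (hd : 0 < d) :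
    ∃ C > 0, ∀ v > 0, HasDerivAt (sphericalSER μ d)
      (C * (v ^ (-((Module.finrank ℝ E : ℝ) + 2) / 2) * exp (-(d ^ 2 / 2) / v))) v := by
  have hpos := Module.finrank_pos (R := ℝ) (M := E)
  set n := Module.finrank ℝ E
  have hball : 0 < μ.real (Metric.ball 0 1) :=
    ENNReal.toReal_pos (Metric.measure_ball_pos μ _ one_pos).ne' measure_ball_lt_top.ne
  set K := n * μ.real (Metric.ball 0 1) * (2 * π) ^ (-(n : ℝ) / 2)
  refine ⟨K * (d ^ n / 2), by positivity, fun v hv => ?_⟩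
  have hclosed : sphericalSER μ d =ᶠ[nhds v]
      fun w => 1 - K * radialGaussianIntegral (n - 1) (d / √w) :=
    Filter.eventually_of_mem (Ioi_mem_nhds hv) fun w hw => sphericalSER_eq μ hd.le hw
  refine (((hasDerivAt_radialGaussianIntegral_div_sqrt (n - 1) d hv).const_mul K).const_sub 1
    |>.congr_of_eventuallyEq hclosed).congr_deriv ?_
  rw [Nat.sub_add_cancel hpos, Nat.cast_sub hpos]
  push_cast
  ring_nf

theorem continuousOn_sphericalSER {d : ℝ} (hd : 0 < d) :
    ContinuousOn (sphericalSER μ d) (Ioi 0) :=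
  have ⟨_, _, hder⟩ := exists_hasDerivAt_sphericalSER μ hd
  fun v hv => (hder v hv).continuousAt.continuousWithinAt

theorem exists_pos_iterate_deriv_two_sphericalSER_eq {d v : ℝ} (hd : 0 < d) (hv : 0 < v) :
    ∃ c > 0, deriv^[2] (sphericalSER μ d) v
      = c * (d ^ 2 - (Module.finrank ℝ E + 2) * v) := by
  obtain ⟨C, hC, hder⟩ := exists_hasDerivAt_sphericalSER μ hd
  set q : ℝ := -((Module.finrank ℝ E : ℝ) + 2) / 2
  have hderiv : deriv (sphericalSER μ d) =ᶠ[nhds v]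
      fun w => C * (w ^ q * exp (-(d ^ 2 / 2) / w)) :=
    Filter.eventually_of_mem (Ioi_mem_nhds hv) fun w hw => (hder w hw).deriv
  refine ⟨C * (v ^ (q - 2) * exp (-(d ^ 2 / 2) / v)) / 2, by positivity, ?_⟩
  rw [Function.iterate_succ_apply', Function.iterate_one, hderiv.deriv_eq,
    ((hasDerivAt_rpow_mul_exp_neg_div q (d ^ 2 / 2) hv).const_mul C).deriv]
  ring

end

/-- For a spherical decision region of radius `d` in the AWGN
channel, the SER as a function of the noise power `v` is strictly convex on
`(0, d²/(n+2)]`, strictly concave on `[d²/(n+2), ∞)`, and `v = d²/(n+2)` is the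
unique inflection point (unique zero of the second derivative on `(0, ∞)`). -/
theorem ser_spherical_region_noise_power
    (n : ℕ) (hn : 1 ≤ n) (d : ℝ) (hd : 0 < d)
    (Pe : ℝ → ℝ)
    (hPe : ∀ v, Pe v =
      1 - ∫ x in Metric.closedBall (0 : EuclideanSpace ℝ (Fin n)) d,
        (2 * π * v) ^ (-(n : ℝ) / 2) * Real.exp (-‖x‖ ^ 2 / (2 * v))) :
    StrictConvexOn ℝ (Ioc (0 : ℝ) (d ^ 2 / ((n : ℝ) + 2))) Pe ∧
      StrictConcaveOn ℝ (Ici (d ^ 2 / ((n : ℝ) + 2))) Pe ∧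
      (∀ v : ℝ, 0 < v →
        (iteratedDeriv 2 Pe v = 0 ↔ v = d ^ 2 / ((n : ℝ) + 2))) := by
  have : Nonempty (Fin n) := Fin.pos_iff_nonempty.mp hn
  have hSER : Pe = sphericalSER (volume : Measure (EuclideanSpace ℝ (Fin n))) d :=
    funext fun v => by rw [hPe, sphericalSER, finrank_euclideanSpace_fin]
  have hsign : ∀ v > 0, ∃ c > 0, deriv^[2] Pe v = c * (d ^ 2 - (n + 2) * v) := by
    simpa only [hSER, finrank_euclideanSpace_fin] using
      fun v (hv : 0 < v) => exists_pos_iterate_deriv_two_sphericalSER_eq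
        (volume : Measure (EuclideanSpace ℝ (Fin n))) hd hv
  have hcont : ContinuousOn Pe (Ioi 0) := hSER ▸ continuousOn_sphericalSER volume hd
  have hn2 : (0 : ℝ) < n + 2 := by positivity
  refine ⟨strictConvexOn_of_deriv2_pos (convex_Ioc _ _) (hcont.mono Ioc_subset_Ioi_self) ?_,
    strictConcaveOn_of_deriv2_neg (convex_Ici _)
      (hcont.mono fun v hv => (show 0 < d ^ 2 / (n + 2) by positivity).trans_le hv) ?_, ?_⟩
  · intro v hv
    rw [interior_Ioc] at hv
    obtain ⟨hv, hvm⟩ := hv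
    obtain ⟨c, hc, h⟩ := hsign v hv
    rw [h]
    exact mul_pos hc (by rw [lt_div_iff₀ hn2] at hvm; linarith)
  · intro v hmv
    rw [interior_Ici, mem_Ioi, div_lt_iff₀ hn2] at hmv
    obtain ⟨c, hc, h⟩ := hsign v (by nlinarith)
    rw [h]
    exact mul_neg_of_pos_of_neg hc (by linarith)
  · intro v hv
    obtain ⟨c, hc, h⟩ := hsign v hv
    rw [iteratedDeriv_eq_iterate, h, mul_eq_zero, or_iff_right hc.ne', sub_eq_zero,
      eq_div_iff hn2.ne']
    constructor <;> intro <;> linarith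
end
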